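/- Let 0 ≤ a ≤ b be real numbers and let f : ℝ → ℝ be continuous on [0, b]. Then the Jackson q-integral of f on [a, b] converges to the Riemann integral as q → 1 from below: lim_{q → 1⁻} (1-q) ∑_{k=0}^∞ q^k (b·f(q^k·b) - a·f(q^k·a)) = ∫_a^b f(x) dx. -/

import Mathlib

/-!
For `c ≥ 0` the Jackson integral `∫_0^c f d_q x` is the right-endpoint Riemann sum of `f` over
the geometric partition `c > qc > q²c > ⋯ → 0`, whose mesh is `(1 - q) c`. By uniform continuity
of `f` on `[0, c]`, each cell contributes an error of at most `ε` times its length once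
`(1 - q) c` is small, so the whole sum is within `ε c` of `∫_0^c f`. The integral over `[a, b]`
is the difference of the integrals from `0` to `b` and to `a`.
-/

open Filter Topology Set MeasureTheory intervalIntegral

noncomputable def jacksonIntegral (q a b : ℝ) (f : ℝ → ℝ) : ℝ :=
  (1 - q) * ∑' k : ℕ, q ^ k * (b * f (q ^ k * b) - a * f (q ^ k * a))

theorem abs_sub_mul_sub_integral_le {f : ℝ → ℝ} {u v ε : ℝ} (huv : u ≤ v)
    (hf : IntervalIntegrable f volume u v) (hosc : ∀ y ∈ Ioc u v, |f v - f y| ≤ ε) :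
    |(v - u) * f v - ∫ y in u..v, f y| ≤ ε * (v - u) := by
  have h := norm_integral_le_of_norm_le_const (f := fun y => f v - f y)
    (by rwa [uIoc_of_le huv])
  rwa [integral_sub intervalIntegrable_const hf, intervalIntegral.integral_const, smul_eq_mul,
    Real.norm_eq_abs, abs_of_nonneg (sub_nonneg.2 huv)] at h

theorem abs_sum_sub_integral_le {f : ℝ → ℝ} {x : ℕ → ℝ} {ε : ℝ} (hx : Antitone x)
    (hf : ∀ k, IntervalIntegrable f volume (x (k + 1)) (x k))
    (hosc : ∀ k, ∀ y ∈ Ioc (x (k + 1)) (x k), |f (x k) - f y| ≤ ε) (n : ℕ) :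
    |∑ k ∈ Finset.range n, (x k - x (k + 1)) * f (x k) - ∫ y in x n..x 0, f y|
      ≤ ε * (x 0 - x n) := by
  have hsplit :
      ∫ y in x n..x 0, f y = ∑ k ∈ Finset.range n, ∫ y in x (k + 1)..x k, f y := by
    rw [integral_symm, ← sum_integral_adjacent_intervals fun k _ => (hf k).symm,
      ← Finset.sum_neg_distrib]
    simp only [← integral_symm]
  calc _ = |∑ k ∈ Finset.range n,
        ((x k - x (k + 1)) * f (x k) - ∫ y in x (k + 1)..x k, f y)| := by
        rw [hsplit, Finset.sum_sub_distrib]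
    _ ≤ ∑ k ∈ Finset.range n, ε * (x k - x (k + 1)) :=
        (Finset.abs_sum_le_sum_abs _ _).trans <| Finset.sum_le_sum fun k _ =>
          abs_sub_mul_sub_integral_le (hx k.le_succ) (hf k) (hosc k)
    _ = ε * (x 0 - x n) := by rw [← Finset.mul_sum, Finset.sum_range_sub']

theorem abs_sub_integral_le_of_hasSum {f : ℝ → ℝ} {x : ℕ → ℝ} {L s ε : ℝ} (hx : Antitone x)
    (hxL : Tendsto x atTop (𝓝 L)) (hf : ContinuousOn f (Icc L (x 0)))
    (hs : HasSum (fun k => (x k - x (k + 1)) * f (x k)) s)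
    (hosc : ∀ k, ∀ y ∈ Ioc (x (k + 1)) (x k), |f (x k) - f y| ≤ ε) :
    |s - ∫ y in L..x 0, f y| ≤ ε * (x 0 - L) := by
  have hmem : ∀ k, x k ∈ Icc L (x 0) := fun k =>
    ⟨hx.le_of_tendsto hxL k, hx (Nat.zero_le k)⟩
  have hL : L ≤ x 0 := (hmem 0).1
  have hprimitive : ContinuousOn (fun t => ∫ y in t..x 0, f y) (Icc L (x 0)) := by
    rw [← uIcc_of_le hL]
    exact continuousOn_primitive_interval_left ((uIcc_of_le hL).symm ▸ hf.integrableOn_Icc)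
  have hI : Tendsto (fun n => ∫ y in x n..x 0, f y) atTop (𝓝 (∫ y in L..x 0, f y)) :=
    (hprimitive L ⟨le_rfl, hL⟩).tendsto.comp
      (tendsto_nhdsWithin_iff.2 ⟨hxL, Eventually.of_forall hmem⟩)
  exact le_of_tendsto_of_tendsto' (hs.tendsto_sum_nat.sub hI).abs
    ((hxL.const_sub (x 0)).const_mul ε)
    (abs_sum_sub_integral_le hx
      (fun k => (hf.mono (uIcc_subset_Icc (hmem (k + 1)) (hmem k))).intervalIntegrable) hosc)

theorem jacksonIntegral_zero_left (q c : ℝ) (f : ℝ → ℝ) :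
    jacksonIntegral q 0 c f = (1 - q) * ∑' k : ℕ, q ^ k * (c * f (q ^ k * c)) := by
  simp [jacksonIntegral]

theorem pow_mul_mem_Icc {q c : ℝ} (hq0 : 0 ≤ q) (hq1 : q ≤ 1) (hc : 0 ≤ c) (k : ℕ) :
    q ^ k * c ∈ Icc 0 c :=
  ⟨by positivity, mul_le_of_le_one_left hc (pow_le_one₀ hq0 hq1)⟩

theorem summable_pow_mul_mul_apply_pow_mul {q c : ℝ} {f : ℝ → ℝ} (hq0 : 0 ≤ q) (hq1 : q < 1)
    (hc : 0 ≤ c) (hf : ContinuousOn f (Icc 0 c)) :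
    Summable fun k : ℕ => q ^ k * (c * f (q ^ k * c)) := by
  obtain ⟨C, hC⟩ := isCompact_Icc.exists_bound_of_continuousOn hf
  refine Summable.of_norm_bounded ((summable_geometric_of_lt_one hq0 hq1).mul_right (c * C))
    fun k => ?_
  rw [norm_mul, norm_mul, Real.norm_of_nonneg (by positivity), Real.norm_of_nonneg hc]
  gcongr
  exact hC _ (pow_mul_mem_Icc hq0 hq1.le hc k)

theorem jacksonIntegral_eq_sub {q a b : ℝ} {f : ℝ → ℝ} (hq0 : 0 ≤ q) (hq1 : q < 1)
    (ha : 0 ≤ a) (hab : a ≤ b) (hf : ContinuousOn f (Icc 0 b)) :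
    jacksonIntegral q a b f = jacksonIntegral q 0 b f - jacksonIntegral q 0 a f := by
  rw [jacksonIntegral_zero_left, jacksonIntegral_zero_left, ← mul_sub,
    ← (summable_pow_mul_mul_apply_pow_mul hq0 hq1 (ha.trans hab) hf).tsum_sub
      (summable_pow_mul_mul_apply_pow_mul hq0 hq1 ha (hf.mono (Icc_subset_Icc_right hab)))]
  simp only [jacksonIntegral, mul_sub]

theorem abs_jacksonIntegral_zero_left_sub_integral_le {q c ε : ℝ} {f : ℝ → ℝ}
    (hq0 : 0 ≤ q) (hq1 : q < 1) (hc : 0 ≤ c) (hf : ContinuousOn f (Icc 0 c))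
    (hosc : ∀ y ∈ Icc 0 c, ∀ z ∈ Icc 0 c, |y - z| ≤ (1 - q) * c → |f y - f z| ≤ ε) :
    |jacksonIntegral q 0 c f - ∫ y in 0..c, f y| ≤ ε * c := by
  have hmem := pow_mul_mem_Icc hq0 hq1.le hc
  have hs : HasSum (fun k : ℕ => (q ^ k * c - q ^ (k + 1) * c) * f (q ^ k * c))
      (jacksonIntegral q 0 c f) := by
    have hterm : (fun k : ℕ => (q ^ k * c - q ^ (k + 1) * c) * f (q ^ k * c))
        = fun k => (1 - q) * (q ^ k * (c * f (q ^ k * c))) := by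
      ext k
      ring
    rw [jacksonIntegral_zero_left, hterm]
    exact (summable_pow_mul_mul_apply_pow_mul hq0 hq1 hc hf).hasSum.mul_left (1 - q)
  have hnodes : Antitone fun k : ℕ => q ^ k * c := fun i j hij =>
    mul_le_mul_of_nonneg_right (pow_le_pow_of_le_one hq0 hq1.le hij) hc
  have hmesh : ∀ k : ℕ, q ^ k * c - q ^ (k + 1) * c ≤ (1 - q) * c := fun k => by
    nlinarith [(hmem k).2, pow_succ q k]
  have h := abs_sub_integral_le_of_hasSum hnodes
    (by simpa using (tendsto_pow_atTop_nhds_zero_of_lt_one hq0 hq1).mul_const c)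
    (by simpa using hf) hs fun k y hy => hosc _ (hmem k) y
      ⟨(hmem (k + 1)).1.trans hy.1.le, hy.2.trans (hmem k).2⟩ <| by
        rw [abs_of_nonneg (sub_nonneg.2 hy.2)]
        linarith [hy.1, hmesh k]
  simpa using h

theorem tendsto_jacksonIntegral_zero_left {c : ℝ} {f : ℝ → ℝ} (hc : 0 ≤ c)
    (hf : ContinuousOn f (Icc 0 c)) :
    Tendsto (fun q => jacksonIntegral q 0 c f) (𝓝[<] 1) (𝓝 (∫ y in 0..c, f y)) := by
  rw [Metric.tendsto_nhds]
  intro ε hε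
  obtain ⟨δ, hδ, hfδ⟩ := Metric.uniformContinuousOn_iff.1
    (isCompact_Icc.uniformContinuousOn_of_continuous hf) (ε / (c + 1)) (by positivity)
  have hmesh : ∀ᶠ q in 𝓝[<] 1, (1 - q) * c < δ := by
    have hcont : Continuous fun q : ℝ => (1 - q) * c := by fun_prop
    exact ((hcont.tendsto' 1 0 (by simp)).eventually (eventually_lt_nhds hδ)).filter_mono
      nhdsWithin_le_nhds
  filter_upwards [hmesh, Ioo_mem_nhdsLT zero_lt_one] with q hq ⟨hq0, hq1⟩
  rw [Real.dist_eq]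
  calc _ ≤ ε / (c + 1) * c :=
        abs_jacksonIntegral_zero_left_sub_integral_le hq0.le hq1 hc hf fun y hy z hz hyz =>
          (hfδ y hy z hz (by rw [Real.dist_eq]; linarith)).le
    _ < ε := by
        rw [div_mul_eq_mul_div, div_lt_iff₀ (by positivity)]
        linarith

/-- For `0 ≤ a ≤ b` and `f` continuous on `[0, b]`, the Jackson q-integral
`∫_a^b f d_q x = (1-q) ∑_{k=0}^∞ q^k (b f(q^k b) - a f(q^k a))` converges to the
Riemann integral `∫_a^b f(x) dx` as `q → 1⁻`. -/
theorem jackson_integral_tendsto_integral (a b : ℝ) (ha : 0 ≤ a) (hab : a ≤ b)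
    (f : ℝ → ℝ) (hf : ContinuousOn f (Set.Icc 0 b)) :
    Tendsto (fun q : ℝ => (1 - q) * ∑' k : ℕ, q ^ k * (b * f (q ^ k * b) - a * f (q ^ k * a)))
      (𝓝[<] 1) (𝓝 (∫ x in a..b, f x)) := by
  have hb : 0 ≤ b := ha.trans hab
  have hfa : ContinuousOn f (Icc 0 a) := hf.mono (Icc_subset_Icc_right hab)
  have hlim :=
    (tendsto_jacksonIntegral_zero_left hb hf).sub (tendsto_jacksonIntegral_zero_left ha hfa)
  rw [integral_interval_sub_left (hf.mono (uIcc_of_le hb).subset).intervalIntegrable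
    (hfa.mono (uIcc_of_le ha).subset).intervalIntegrable] at hlim
  refine hlim.congr' ?_
  filter_upwards [Ioo_mem_nhdsLT zero_lt_one] with q ⟨hq0, hq1⟩
  exact (jacksonIntegral_eq_sub hq0.le hq1 ha hab hf).symm
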